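/- Under assumptions that f is C², bounded below, coercive, has Lipschitz and bounded gradient, and Z(x)⁻¹ is diagonal with entries uniformly bounded in (d₁, d₂) with d₁ > 0, any solution x(t) of ẋ(t) = −Z(x(t))⁻¹∇f(x(t)) satisfies lim_{t→∞} ‖∇f(x(t))‖ = 0. -/

import Mathlib

/-!
Along the flow, `f ∘ x` is differentiable with derivative `⟪∇f, ẋ⟫ = -∑ zᵢ (∂ᵢf)² ≤ -d₁ ‖∇f‖²`,
so it decreases and, being bounded below, converges. The speed is at most `d₂ B`, hence
`t ↦ ‖∇f(x t)‖` is Lipschitz. If it did not tend to zero, it would stay above `ε / 2` on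
windows of fixed length arbitrarily far out, on each of which `f ∘ x` drops by a fixed amount,
contradicting the convergence of `f ∘ x` (Barbalat's lemma).
-/

open Filter Set Topology
open scoped InnerProductSpace

theorem HasGradientAt.comp_hasDerivAt {F : Type*} [NormedAddCommGroup F] [InnerProductSpace ℝ F]
    [CompleteSpace F] {f : F → ℝ} {f' : F} {γ : ℝ → F} {γ' : F} {t : ℝ}
    (hf : HasGradientAt f f' (γ t)) (hγ : HasDerivAt γ γ' t) :
    HasDerivAt (f ∘ γ) ⟪f', γ'⟫_ℝ t := by
  simpa using (hasGradientAt_iff_hasFDerivAt.mp hf).comp_hasDerivAt t hγ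

section DiagonalScaling

variable {ι : Type*} [Fintype ι] {w : ι → ℝ} {g v : EuclideanSpace ℝ ι}

theorem inner_le_neg_mul_norm_sq_of_diagonal_scaling {m : ℝ} (hv : ∀ i, v i = -w i * g i)
    (hw : ∀ i, m ≤ w i) : ⟪g, v⟫_ℝ ≤ -(m * ‖g‖ ^ 2) := by
  rw [EuclideanSpace.real_norm_sq_eq, Finset.mul_sum, ← Finset.sum_neg_distrib, PiLp.inner_apply]
  refine Finset.sum_le_sum fun i _ => ?_
  rw [hv i, Real.inner_apply]
  nlinarith [mul_le_mul_of_nonneg_right (hw i) (sq_nonneg (g i))]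

theorem norm_le_mul_norm_of_diagonal_scaling {C : ℝ} (hv : ∀ i, v i = -w i * g i)
    (hw : ∀ i, |w i| ≤ C) (hC : 0 ≤ C) : ‖v‖ ≤ C * ‖g‖ := by
  refine le_of_sq_le_sq ?_ (by positivity)
  rw [mul_pow, EuclideanSpace.real_norm_sq_eq, EuclideanSpace.real_norm_sq_eq, Finset.mul_sum]
  refine Finset.sum_le_sum fun i _ => ?_
  rw [hv i, neg_mul, neg_sq, mul_pow]
  exact mul_le_mul_of_nonneg_right (sq_le_sq' (abs_le.mp (hw i)).1 (abs_le.mp (hw i)).2)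
    (sq_nonneg _)

end DiagonalScaling

theorem sub_le_mul_sub_of_hasDerivAt_le {V V' : ℝ → ℝ} {a b C : ℝ} (hab : a ≤ b)
    (hV : ∀ t ∈ Icc a b, HasDerivAt V (V' t) t) (hV' : ∀ t ∈ Icc a b, V' t ≤ C) :
    V b - V a ≤ C * (b - a) := by
  refine (convex_Icc a b).image_sub_le_mul_sub_of_deriv_le
    (fun t ht => (hV t ht).continuousAt.continuousWithinAt)
    (fun t ht => (hV t (interior_subset ht)).differentiableAt.differentiableWithinAt)
    (fun t ht => ?_) a (left_mem_Icc.mpr hab) b (right_mem_Icc.mpr hab) hab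
  rw [(hV t (interior_subset ht)).deriv]
  exact hV' t (interior_subset ht)

theorem exists_tendsto_of_antitoneOn_Ici {V : ℝ → ℝ} {a M : ℝ} (hV : AntitoneOn V (Ici a))
    (hM : ∀ t ≥ a, M ≤ V t) : ∃ ℓ, Tendsto V atTop (𝓝 ℓ) := by
  have hW : Antitone fun t => V (max t a) := fun s t hst =>
    hV (le_max_right s a) (le_max_right t a) (max_le_max_right a hst)
  refine ⟨_, (tendsto_atTop_ciInf hW ⟨M, ?_⟩).congr' ?_⟩
  · rintro _ ⟨t, rfl⟩
    exact hM _ (le_max_right t a)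
  · filter_upwards [eventually_ge_atTop a] with t ht
    rw [max_eq_left ht]

theorem tendsto_zero_of_hasDerivAt_le_neg_mul_sq {V V' φ : ℝ → ℝ} {c M : ℝ} (hc : 0 < c)
    (hV : ∀ t ≥ 0, HasDerivAt V (V' t) t) (hV' : ∀ t ≥ 0, V' t ≤ -(c * φ t ^ 2))
    (hM : ∀ t ≥ 0, M ≤ V t) (hφ : UniformContinuousOn φ (Ici 0)) :
    Tendsto φ atTop (𝓝 0) := by
  have hdrop : ∀ a b m, 0 ≤ a → a ≤ b → (∀ t ∈ Icc a b, m ≤ c * φ t ^ 2) →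
      V b - V a ≤ -m * (b - a) := fun a b m ha hab hm =>
    sub_le_mul_sub_of_hasDerivAt_le hab (fun t ht => hV t (ha.trans ht.1))
      (fun t ht => (hV' t (ha.trans ht.1)).trans (by linarith [hm t ht]))
  have hanti : AntitoneOn V (Ici 0) := fun s hs t _ hst => by
    linarith [hdrop s t 0 hs hst fun u _ => by positivity]
  obtain ⟨ℓ, hℓ⟩ := exists_tendsto_of_antitoneOn_Ici hanti hM
  by_contra hφ0
  obtain ⟨ε, hε, hfreq⟩ : ∃ ε > 0, ∃ᶠ t in atTop, ε ≤ |φ t| := by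
    simpa [Metric.tendsto_nhds, Real.dist_0_eq_abs, frequently_atTop] using hφ0
  obtain ⟨δ, hδ, hφδ⟩ := Metric.uniformContinuousOn_iff.mp hφ (ε / 2) (half_pos hε)
  have hincrement : Tendsto (fun t => V (t + δ / 2) - V t) atTop (𝓝 0) := by
    simpa using (hℓ.comp (tendsto_atTop_add_const_right _ (δ / 2) tendsto_id)).sub hℓ
  have hgap : -(c * (ε / 2) ^ 2 * (δ / 2)) < 0 := by
    have : 0 < c * (ε / 2) ^ 2 * (δ / 2) := by positivity
    linarith
  obtain ⟨t, ⟨hεt, ht⟩, hVt⟩ := ((hfreq.and_eventually (eventually_ge_atTop 0)).and_eventually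
    (hincrement.eventually (eventually_gt_nhds hgap))).exists
  have hlow : ∀ u ∈ Icc t (t + δ / 2), c * (ε / 2) ^ 2 ≤ c * φ u ^ 2 := by
    intro u hu
    have hclose : |φ u - φ t| < ε / 2 := by
      refine hφδ u (ht.trans hu.1) t ht ?_
      rw [Real.dist_eq, abs_lt]
      constructor <;> linarith [hu.1, hu.2]
    have hφu : |ε / 2| ≤ |φ u| := by
      rw [abs_of_pos (half_pos hε)]
      linarith [abs_sub_abs_le_abs_sub (φ t) (φ u), abs_sub_comm (φ u) (φ t)]
    exact mul_le_mul_of_nonneg_left (sq_le_sq.mpr hφu) hc.le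
  linarith [hdrop t (t + δ / 2) _ ht (by linarith) hlow]

theorem scaled_gradient_flow_gradient_tendsto_zero_general
    {n : ℕ} (f : EuclideanSpace ℝ (Fin n) → ℝ)
    (z : EuclideanSpace ℝ (Fin n) → Fin n → ℝ) (d₁ d₂ R B L : ℝ)
    (hf : ContDiff ℝ 2 f)
    (hbelow : ∀ p, -R < f p)
    (hL : ∀ p q, ‖gradient f p - gradient f q‖ ≤ L * ‖p - q‖)
    (hbdd : ∀ p, ‖gradient f p‖ ≤ B)
    (hd₁ : 0 < d₁) (hd₂ : 0 < d₂)
    (hz : ∀ p i, d₁ < z p i ∧ z p i < d₂)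
    (x : ℝ → EuclideanSpace ℝ (Fin n))
    (hx : Differentiable ℝ x)
    (hode : ∀ t, 0 ≤ t → ∀ i, (deriv x t) i = -(z (x t) i) * (gradient f (x t)) i) :
    Tendsto (fun t => ‖gradient f (x t)‖) atTop (nhds 0) := by
  have hfd : Differentiable ℝ f := hf.differentiable two_ne_zero
  have hdissipation : ∀ t ≥ 0, ⟪gradient f (x t), deriv x t⟫_ℝ ≤ -(d₁ * ‖gradient f (x t)‖ ^ 2) :=
    fun t ht => inner_le_neg_mul_norm_sq_of_diagonal_scaling (hode t ht) fun i => (hz _ i).1.le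
  have hspeed : ∀ t ≥ 0, ‖deriv x t‖ ≤ d₂ * B := fun t ht =>
    (norm_le_mul_norm_of_diagonal_scaling (hode t ht)
      (fun i => (abs_of_pos (hd₁.trans (hz _ i).1)).trans_le (hz _ i).2.le) hd₂.le).trans
      (mul_le_mul_of_nonneg_left (hbdd _) hd₂.le)
  have hx_lip : LipschitzOnWith (d₂ * B).toNNReal x (Ici 0) :=
    (convex_Ici 0).lipschitzOnWith_of_nnnorm_hasDerivWithin_le
      (fun t _ => (hx t).hasDerivAt.hasDerivWithinAt)
      (fun t ht => by
        rw [← NNReal.coe_le_coe, coe_nnnorm]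
        exact (hspeed t ht).trans (Real.le_coe_toNNReal _))
  have hgrad_lip : LipschitzWith L.toNNReal (gradient f) := .of_dist_le_mul fun p q => by
    rw [dist_eq_norm, dist_eq_norm]
    exact (hL p q).trans (mul_le_mul_of_nonneg_right (Real.le_coe_toNNReal L) (norm_nonneg _))
  exact tendsto_zero_of_hasDerivAt_le_neg_mul_sq hd₁
    (fun t _ => (hfd _).hasGradientAt.comp_hasDerivAt (hx t).hasDerivAt) hdissipation
    (fun t _ => (hbelow (x t)).le)
    ((lipschitzWith_one_norm.comp hgrad_lip).comp_lipschitzOnWith hx_lip).uniformContinuousOn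

/-- Theorem 1: under the paper's assumptions (A1)–(A5), any solution of the scaled
gradient flow `ẋ = −Z(x)⁻¹∇f(x)` satisfies `‖∇f(x(t))‖ → 0` as `t → ∞`. -/
theorem scaled_gradient_flow_gradient_tendsto_zero
    {n : ℕ} (f : EuclideanSpace ℝ (Fin n) → ℝ)
    (z : EuclideanSpace ℝ (Fin n) → Fin n → ℝ) (d₁ d₂ R B L : ℝ)
    (hf : ContDiff ℝ 2 f)
    (hR : 0 < R) (hbelow : ∀ p, -R < f p)
    (hcoercive : Tendsto f (cocompact _) atTop)
    (hL : ∀ p q, ‖gradient f p - gradient f q‖ ≤ L * ‖p - q‖)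
    (hB : 0 < B) (hbdd : ∀ p, ‖gradient f p‖ ≤ B)
    (hd₁ : 0 < d₁) (hd₂ : 0 < d₂)
    (hz : ∀ p i, d₁ < z p i ∧ z p i < d₂)
    (x : ℝ → EuclideanSpace ℝ (Fin n)) (x₀ : EuclideanSpace ℝ (Fin n))
    (hx : Differentiable ℝ x) (hx0 : x 0 = x₀)
    (hode : ∀ t, 0 ≤ t → ∀ i, (deriv x t) i = -(z (x t) i) * (gradient f (x t)) i) :
    Tendsto (fun t => ‖gradient f (x t)‖) atTop (nhds 0) :=
  scaled_gradient_flow_gradient_tendsto_zero_general f z d₁ d₂ R B L hf hbelow hL hbdd hd₁ hd₂ hz x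
    hx hode
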